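/- arXiv:2311.08777 — 4 statements merged into one kernel-verified Lean document; each statement's English description precedes it below -/
import Mathlib

section
/- For every u ∈ 𝒟 with u⁺ ≠ 0 and u⁻ ≠ 0 there exists a unique pair of reals (s0, t0) with s0 > 0 and t0 > 0 such that s0·u⁺ + t0·u⁻ ∈ ℳ, i.e. ⟨I'(s0·u⁺ + t0·u⁻), s0·u⁺⟩ = 0 and ⟨I'(s0·u⁺ + t0·u⁻), t0·u⁻⟩ = 0. -/
noncomputable section

open Real Filter Set

namespace DPLap

/-- Forward difference operator. -/
def dlt (u : ℤ → ℝ) (n : ℤ) : ℝ := u (n + 1) - u n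

/-- Positive part `u⁺`. -/
def pos (u : ℤ → ℝ) : ℤ → ℝ := fun n => max (u n) 0

/-- Negative part `u⁻`. -/
def neg (u : ℤ → ℝ) : ℤ → ℝ := fun n => min (u n) 0

/-- Summand of the `E`-norm. -/
def nsum (a b : ℤ → ℝ) (p : ℕ) (u : ℤ → ℝ) (n : ℤ) : ℝ :=
  a n * |dlt u n| ^ p + b n * |u n| ^ p

/-- Membership in the space `E`. -/
def memE (a b : ℤ → ℝ) (p : ℕ) (u : ℤ → ℝ) : Prop :=
  Summable (nsum a b p u)

/-- The norm `‖u‖ = (∑ [a|Δu|^p + b|u|^p])^(1/p)`. -/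
def dnorm (a b : ℤ → ℝ) (p : ℕ) (u : ℤ → ℝ) : ℝ :=
  (∑' n : ℤ, nsum a b p u n) ^ ((p : ℝ)⁻¹)

/-- Summand `c(n)|u(n)|^q ln(|u(n)|^r)` of the logarithmic term (with the
convention `0^q ln 0 = 0`, automatic from `Real.rpow` and `Real.log`). -/
def logSummand (c : ℤ → ℝ) (q r : ℝ) (u : ℤ → ℝ) (n : ℤ) : ℝ :=
  c n * |u n| ^ q * Real.log (|u n| ^ r)

/-- Membership in `𝒟`. -/
def memD (a b c : ℤ → ℝ) (p : ℕ) (q r : ℝ) (u : ℤ → ℝ) : Prop :=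
  memE a b p u ∧ Summable (logSummand c q r u)

/-- The energy functional `I`. -/
def En (a b c : ℤ → ℝ) (p : ℕ) (q r : ℝ) (u : ℤ → ℝ) : ℝ :=
  (1 / (p : ℝ)) * dnorm a b p u ^ p
    + (r / q ^ 2) * ∑' n : ℤ, c n * |u n| ^ q
    - (1 / q) * ∑' n : ℤ, logSummand c q r u n

/-- The pairing `⟨I'(u), v⟩`. -/
def pr (a b c : ℤ → ℝ) (p : ℕ) (q r : ℝ) (u v : ℤ → ℝ) : ℝ :=
  (∑' n : ℤ, (a n * |dlt u n| ^ (p - 2) * dlt u n * dlt v n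
      + b n * |u n| ^ (p - 2) * u n * v n))
    - ∑' n : ℤ, c n * |u n| ^ (q - 2) * u n * v n * Real.log (|u n| ^ r)

/-- The Nehari set `𝒩`. -/
def Nset (a b c : ℤ → ℝ) (p : ℕ) (q r : ℝ) : Set (ℤ → ℝ) :=
  {u | memD a b c p q r u ∧ u ≠ 0 ∧ pr a b c p q r u u = 0}

/-- The sign-changing Nehari set `ℳ`. -/
def Mset (a b c : ℤ → ℝ) (p : ℕ) (q r : ℝ) : Set (ℤ → ℝ) :=
  {u | memD a b c p q r u ∧ pos u ≠ 0 ∧ neg u ≠ 0 ∧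
      pr a b c p q r u (pos u) = 0 ∧ pr a b c p q r u (neg u) = 0}

/-- `m* = inf_ℳ I`. -/
def mStar (a b c : ℤ → ℝ) (p : ℕ) (q r : ℝ) : ℝ :=
  sInf (En a b c p q r '' Mset a b c p q r)

/-- `c* = inf_𝒩 I`. -/
def cStar (a b c : ℤ → ℝ) (p : ℕ) (q r : ℝ) : ℝ :=
  sInf (En a b c p q r '' Nset a b c p q r)

open Topology

/-!
For `w = s u⁺ + t u⁻` the two Nehari conditions decouple: `u⁺` and `u⁻` have disjoint supports
and `Δu⁺`, `Δu⁻` have the same sign, so `⟨I'(w), s u⁺⟩` is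
`F(s, t) = ∑ a (s |Δu⁺| + t |Δu⁻|)^(p-1) s |Δu⁺| + s^p B - s^q (r C ln s + D)`
with constants `B, C > 0` and `D` computed from `u⁺`, and `⟨I'(w), t u⁻⟩` is the same expression
with the roles of `(s, u⁺)` and `(t, u⁻)` exchanged.

Existence: `s ∂ₛ` and `t ∂ₜ` of the fibre energy `I(s u⁺ + t u⁻)` are these two functions. Since
`q > p` the energy tends to `-∞` at infinity, and since the logarithmic term is `o(s^p)` at `0` it
increases when one moves off either axis; so it has an interior maximum, a common zero.

Uniqueness: along `(s, t) ↦ (l s, m t)` with `m ≤ l` the homogeneous part of `F` grows at most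
like `l^p`, while the logarithmic part grows like `l^q` plus `l^q s^q r C ln l`. Comparing two zeros
along the coordinate with the larger ratio forces that ratio to be at most `1`; doing this for both
functions gives equality.
-/

lemma abs_add_of_mul_nonneg {x y : ℝ} (h : 0 ≤ x * y) : |x + y| = |x| + |y| :=
  (abs_add_eq_add_abs_iff x y).2 (mul_nonneg_iff.1 h)

lemma add_mul_le_max_mul (x y : ℝ) {α₀ β₀ : ℝ} (hα : 0 ≤ α₀) (hβ : 0 ≤ β₀) :
    x * α₀ + y * β₀ ≤ max x y * (α₀ + β₀) := by
  nlinarith [le_max_left x y, le_max_right x y]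

lemma abs_add_pow_mul_eq {x y : ℝ} (h : 0 ≤ x * y) (k : ℕ) :
    |x + y| ^ k * (x + y) * x = (|x| + |y|) ^ (k + 1) * |x| := by
  have hxy : (x + y) * x = (|x| + |y|) * |x| := by
    rw [add_mul, add_mul, abs_mul_abs_self, ← abs_mul, abs_of_nonneg (by linarith)]
  rw [mul_assoc, hxy, abs_add_of_mul_nonneg h]
  ring

lemma abs_pow_mul_mul_of_eq_zero_or_eq {x y : ℝ} (hy : y = 0 ∨ y = x) (k : ℕ) :
    |x| ^ k * x * y = |y| ^ (k + 2) := by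
  rcases hy with rfl | rfl
  · simp
  · rw [mul_assoc, ← abs_mul_abs_self]
    ring

lemma abs_rpow_mul_mul_log_of_eq_zero_or_eq {x y : ℝ} (hy : y = 0 ∨ y = x) {q : ℝ} (hq : q ≠ 0)
    (r : ℝ) : |x| ^ (q - 2) * x * y * log (|x| ^ r) = |y| ^ q * log (|y| ^ r) := by
  rcases hy with rfl | rfl
  · simp [Real.zero_rpow hq]
  rcases eq_or_ne y 0 with rfl | hy
  · simp [Real.zero_rpow hq]
  have hsq : |y| ^ (q - 2) * y * y = |y| ^ q := by
    rw [mul_assoc, ← abs_mul_abs_self, ← mul_assoc, ← Real.rpow_add_one (abs_ne_zero.2 hy),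
      ← Real.rpow_add_one (abs_ne_zero.2 hy)]
    ring_nf
  rw [hsq]

lemma pos_eq_zero_or_eq (u : ℤ → ℝ) (n : ℤ) : pos u n = 0 ∨ pos u n = u n := by
  rcases le_total (u n) 0 with h | h
  · exact .inl (max_eq_right h)
  · exact .inr (max_eq_left h)

lemma neg_eq_zero_or_eq (u : ℤ → ℝ) (n : ℤ) : neg u n = 0 ∨ neg u n = u n := by
  rcases le_total (u n) 0 with h | h
  · exact .inr (min_eq_left h)
  · exact .inl (min_eq_right h)

lemma pos_eq_zero_or_neg_eq_zero (u : ℤ → ℝ) (n : ℤ) : pos u n = 0 ∨ neg u n = 0 := by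
  rcases le_total (u n) 0 with h | h
  · exact .inl (max_eq_right h)
  · exact .inr (min_eq_right h)

lemma abs_le_of_eq_zero_or_eq {x y : ℝ} (hy : y = 0 ∨ y = x) : |y| ≤ |x| := by
  rcases hy with rfl | rfl <;> simp

lemma pos_add_neg (u : ℤ → ℝ) (n : ℤ) : pos u n + neg u n = u n := by
  simp [pos, neg, max_add_min]

lemma dlt_pos_mul_dlt_neg_nonneg (u : ℤ → ℝ) (n : ℤ) : 0 ≤ dlt (pos u) n * dlt (neg u) n := by
  simp only [dlt, pos, neg]
  rcases le_total (u n) 0 with h | h <;> rcases le_total (u (n + 1)) 0 with h' | h' <;>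
    simp only [max_eq_left, max_eq_right, min_eq_left, min_eq_right, h, h'] <;> nlinarith

lemma abs_dlt_pos_add_abs_dlt_neg (u : ℤ → ℝ) (n : ℤ) :
    |dlt (pos u) n| + |dlt (neg u) n| = |dlt u n| := by
  rw [← abs_add_of_mul_nonneg (dlt_pos_mul_dlt_neg_nonneg u n)]
  simp only [dlt, ← pos_add_neg u]
  ring_nf

lemma pos_smul_add_smul (u : ℤ → ℝ) {s t : ℝ} (hs : 0 ≤ s) (ht : 0 ≤ t) :
    pos (fun n => s * pos u n + t * neg u n) = fun n => s * pos u n := by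
  funext n
  simp only [pos, neg]
  rcases le_total (u n) 0 with h | h
  · rw [max_eq_right h, min_eq_left h, max_eq_right (by nlinarith)]
    ring
  · rw [max_eq_left h, min_eq_right h, max_eq_left (by nlinarith)]
    ring

lemma neg_smul_add_smul (u : ℤ → ℝ) {s t : ℝ} (hs : 0 ≤ s) (ht : 0 ≤ t) :
    neg (fun n => s * pos u n + t * neg u n) = fun n => t * neg u n := by
  funext n
  simp only [pos, neg]
  rcases le_total (u n) 0 with h | h
  · rw [max_eq_right h, min_eq_left h, min_eq_left (by nlinarith)]
    ring
  · rw [max_eq_left h, min_eq_right h, min_eq_right (by nlinarith)]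
    ring

lemma pr_add_of_disjoint (a b c : ℤ → ℝ) {p : ℕ} (hp : 2 ≤ p) {q : ℝ} (hq : q ≠ 0) (r : ℝ)
    {v v' : ℤ → ℝ}
    (hdisj : ∀ n, v n = 0 ∨ v' n = 0) (hdlt : ∀ n, 0 ≤ dlt v n * dlt v' n) :
    pr a b c p q r (fun n => v n + v' n) v =
      ∑' n, (a n * (|dlt v n| + |dlt v' n|) ^ (p - 1) * |dlt v n| + b n * |v n| ^ p)
        - ∑' n, logSummand c q r v n := by
  obtain ⟨k, rfl⟩ := Nat.exists_eq_add_of_le' hp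
  have hv : ∀ n, v n = 0 ∨ v n = v n + v' n := fun n => by
    rcases hdisj n with h | h <;> simp [h]
  unfold pr logSummand
  congr 1 <;> refine tsum_congr fun n => ?_
  · have hd : dlt (fun n => v n + v' n) n = dlt v n + dlt v' n := by simp only [dlt]; ring
    rw [Nat.add_sub_cancel, show k + 2 - 1 = k + 1 by omega, hd]
    linear_combination a n * abs_add_pow_mul_eq (hdlt n) k
      + b n * abs_pow_mul_mul_of_eq_zero_or_eq (hv n) k
  · linear_combination c n * abs_rpow_mul_mul_log_of_eq_zero_or_eq (hv n) hq r

lemma logSummand_smul (c : ℤ → ℝ) {q : ℝ} (hq : q ≠ 0) (r : ℝ) {s : ℝ} (hs : 0 < s)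
    (v : ℤ → ℝ) (n : ℤ) :
    logSummand c q r (fun n => s * v n) n =
      s ^ q * (r * log s * (c n * |v n| ^ q) + logSummand c q r v n) := by
  unfold logSummand
  rw [abs_mul, abs_of_pos hs, Real.mul_rpow hs.le (abs_nonneg _)]
  rcases eq_or_ne (v n) 0 with h | h
  · simp [h, Real.zero_rpow hq]
  rw [Real.mul_rpow hs.le (abs_nonneg _),
    Real.log_mul (Real.rpow_pos_of_pos hs r).ne' (Real.rpow_pos_of_pos (abs_pos.2 h) r).ne',
    Real.log_rpow hs]
  ring

lemma logSummand_of_eq_zero (c : ℤ → ℝ) (q r : ℝ) {v : ℤ → ℝ} {n : ℤ} (h : v n = 0) :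
    logSummand c q r v n = 0 := by
  rw [logSummand, h, abs_zero]
  rcases eq_or_ne r 0 with rfl | hr
  · simp
  · simp [Real.zero_rpow hr]

/-- `nehariFn … B C D s t` is `⟨I'(w), s v⟩` for `w = s v + t v'`, where `α = |Δv|`,
`β = |Δv'|`, `B = ∑ b |v|^p`, `C = ∑ c |v|^q` and `D = ∑ c |v|^q ln |v|^r`. -/
def nehariFn (a α β : ℤ → ℝ) (p : ℕ) (q r B C D s t : ℝ) : ℝ :=
  ∑' n, a n * (s * α n + t * β n) ^ (p - 1) * (s * α n) + s ^ p * B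
    - s ^ q * (r * log s * C + D)

lemma summable_mul_pow_mul {a α β : ℤ → ℝ} {p : ℕ} (hp : 1 ≤ p) (ha : ∀ n, 0 ≤ a n)
    (hα : ∀ n, 0 ≤ α n) (hβ : ∀ n, 0 ≤ β n) (hA : Summable fun n => a n * (α n + β n) ^ p)
    {x y : ℝ} (hx : 0 ≤ x) (hy : 0 ≤ y) :
    Summable fun n => a n * (x * α n + y * β n) ^ (p - 1) * α n := by
  refine Summable.of_nonneg_of_le (fun n => ?_) (fun n => ?_) (hA.mul_left (max x y ^ (p - 1)))
  · have := hα n; have := hβ n; have := ha n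
    positivity
  · have := hα n; have := hβ n; have := ha n
    calc a n * (x * α n + y * β n) ^ (p - 1) * α n
        ≤ a n * (max x y * (α n + β n)) ^ (p - 1) * (α n + β n) := by
          gcongr
          · exact add_mul_le_max_mul x y (hα n) (hβ n)
          · linarith
      _ = max x y ^ (p - 1) * (a n * (α n + β n) ^ p) := by
          obtain ⟨k, rfl⟩ := Nat.exists_eq_add_of_le' hp
          rw [mul_pow, Nat.add_sub_cancel, pow_succ]
          ring

lemma pr_smul_add_smul (a b c : ℤ → ℝ) {p : ℕ} (hp : 2 ≤ p) {q : ℝ} (hq : q ≠ 0) (r : ℝ)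
    (ha : ∀ n, 0 ≤ a n) {v v' : ℤ → ℝ} (hdisj : ∀ n, v n = 0 ∨ v' n = 0)
    (hdlt : ∀ n, 0 ≤ dlt v n * dlt v' n)
    (hA : Summable fun n => a n * (|dlt v n| + |dlt v' n|) ^ p)
    (hB : Summable fun n => b n * |v n| ^ p) (hC : Summable fun n => c n * |v n| ^ q)
    (hD : Summable (logSummand c q r v)) {s t : ℝ} (hs : 0 < s) (ht : 0 < t) :
    pr a b c p q r (fun n => s * v n + t * v' n) (fun n => s * v n) =
      nehariFn a (fun n => |dlt v n|) (fun n => |dlt v' n|) p q r (∑' n, b n * |v n| ^ p)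
        (∑' n, c n * |v n| ^ q) (∑' n, logSummand c q r v n) s t := by
  have hsv : ∀ n, |dlt (fun n => s * v n) n| = s * |dlt v n| := fun n => by
    simp only [dlt, ← mul_sub, abs_mul, abs_of_pos hs]
  have htv : ∀ n, |dlt (fun n => t * v' n) n| = t * |dlt v' n| := fun n => by
    simp only [dlt, ← mul_sub, abs_mul, abs_of_pos ht]
  have hmix :
      Summable fun n => a n * (s * |dlt v n| + t * |dlt v' n|) ^ (p - 1) * (s * |dlt v n|) :=
    ((summable_mul_pow_mul (by omega) ha (fun n => abs_nonneg _) (fun n => abs_nonneg _) hA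
      hs.le ht.le).mul_left s).congr fun n => by ring
  have hdlt' : ∀ n, 0 ≤ dlt (fun n => s * v n) n * dlt (fun n => t * v' n) n := fun n => by
    simpa only [dlt, ← mul_sub, mul_mul_mul_comm] using mul_nonneg (mul_pos hs ht).le (hdlt n)
  rw [pr_add_of_disjoint a b c hp hq r (fun n => by rcases hdisj n with h | h <;> simp [h]) hdlt']
  simp only [hsv, htv, abs_mul, abs_of_pos hs, mul_pow, logSummand_smul c hq r hs]
  rw [Summable.tsum_add hmix ((hB.mul_left (s ^ p)).congr fun n => by ring), tsum_mul_left,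
    Summable.tsum_add (hC.mul_left _) hD]
  have hbs : ∑' n, b n * (s ^ p * |v n| ^ p) = s ^ p * ∑' n, b n * |v n| ^ p := by
    rw [← tsum_mul_left]
    exact tsum_congr fun n => by ring
  rw [hbs, tsum_mul_left, nehariFn]

section Uniqueness

variable {a α β : ℤ → ℝ} {p : ℕ} {q r : ℝ}

lemma tsum_mul_pow_mul_nonneg (ha : ∀ n, 0 ≤ a n) (hα : ∀ n, 0 ≤ α n) (hβ : ∀ n, 0 ≤ β n)
    {x y : ℝ} (hx : 0 ≤ x) (hy : 0 ≤ y) :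
    0 ≤ ∑' n, a n * (x * α n + y * β n) ^ (p - 1) * (x * α n) :=
  tsum_nonneg fun n => by have := ha n; have := hα n; have := hβ n; positivity

lemma tsum_mul_pow_mul_le_pow_mul_tsum (hp : 1 ≤ p) (ha : ∀ n, 0 ≤ a n) (hα : ∀ n, 0 ≤ α n)
    (hβ : ∀ n, 0 ≤ β n) (hA : Summable fun n => a n * (α n + β n) ^ p) {x y l m : ℝ}
    (hx : 0 ≤ x) (hy : 0 ≤ y) (hm : 0 ≤ m) (hml : m ≤ l) :
    ∑' n, a n * (l * x * α n + m * y * β n) ^ (p - 1) * (l * x * α n)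
      ≤ l ^ p * ∑' n, a n * (x * α n + y * β n) ^ (p - 1) * (x * α n) := by
  have hl : 0 ≤ l := hm.trans hml
  rw [← tsum_mul_left]
  refine Summable.tsum_le_tsum (fun n => ?_)
    (((summable_mul_pow_mul hp ha hα hβ hA (mul_nonneg hl hx) (mul_nonneg hm hy)).mul_left
      (l * x)).congr fun n => by ring)
    (((summable_mul_pow_mul hp ha hα hβ hA hx hy).mul_left (l ^ p * x)).congr fun n => by ring)
  have := ha n; have := hα n; have := hβ n
  have hle : l * x * α n + m * y * β n ≤ l * (x * α n + y * β n) := by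
    nlinarith [mul_le_mul_of_nonneg_right hml (mul_nonneg hy (hβ n))]
  calc a n * (l * x * α n + m * y * β n) ^ (p - 1) * (l * x * α n)
      ≤ a n * (l * (x * α n + y * β n)) ^ (p - 1) * (l * x * α n) := by gcongr
    _ = l ^ p * (a n * (x * α n + y * β n) ^ (p - 1) * (x * α n)) := by
      rw [mul_pow, ← pow_sub_one_mul (by omega : p ≠ 0) l]
      ring

lemma le_of_nehariFn_eq_zero (hp : 1 ≤ p) (hpq : (p : ℝ) < q) (hr : 0 < r)
    (ha : ∀ n, 0 ≤ a n) (hα : ∀ n, 0 ≤ α n) (hβ : ∀ n, 0 ≤ β n)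
    (hA : Summable fun n => a n * (α n + β n) ^ p) {B C : ℝ} (hB : 0 < B) (hC : 0 < C) (D : ℝ)
    {x₁ y₁ x₂ y₂ : ℝ} (hx₁ : 0 < x₁) (hy₁ : 0 < y₁) (hy₂ : 0 < y₂)
    (h₁ : nehariFn a α β p q r B C D x₁ y₁ = 0) (h₂ : nehariFn a α β p q r B C D x₂ y₂ = 0)
    (hyx : y₂ * x₁ ≤ y₁ * x₂) : x₂ ≤ x₁ := by
  set l := x₂ / x₁
  set m := y₂ / y₁
  have hx₂ : x₂ = l * x₁ := (div_mul_cancel₀ x₂ hx₁.ne').symm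
  have hy₂' : y₂ = m * y₁ := (div_mul_cancel₀ y₂ hy₁.ne').symm
  have hml : m ≤ l := by rw [div_le_div_iff₀ hy₁ hx₁]; linarith
  suffices l ≤ 1 by rwa [div_le_one hx₁] at this
  by_contra! hl
  have hl0 : 0 < l := by linarith
  set Q := ∑' n, a n * (x₁ * α n + y₁ * β n) ^ (p - 1) * (x₁ * α n) + x₁ ^ p * B
  have hQ : 0 < Q := by
    have := tsum_mul_pow_mul_nonneg (p := p) ha hα hβ hx₁.le hy₁.le
    positivity
  have hmix := tsum_mul_pow_mul_le_pow_mul_tsum hp ha hα hβ hA hx₁.le hy₁.le (by positivity) hml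
  have hlpq : l ^ p ≤ l ^ q := by
    rw [← Real.rpow_natCast]
    exact Real.rpow_le_rpow_of_exponent_le hl.le hpq.le
  have hlog : 0 < l ^ q * x₁ ^ q * (r * log l * C) := by
    have := Real.log_pos hl
    positivity
  have h₁' : x₁ ^ q * (r * log x₁ * C + D) = Q := by unfold nehariFn at h₁; linarith
  have h₂' : (l * x₁) ^ q * (r * log (l * x₁) * C + D)
      = l ^ q * Q + l ^ q * x₁ ^ q * (r * log l * C) := by
    rw [Real.mul_rpow hl0.le hx₁.le, Real.log_mul hl0.ne' hx₁.ne', ← h₁']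
    ring
  unfold nehariFn at h₂
  rw [hx₂, hy₂', h₂', mul_pow] at h₂
  nlinarith [mul_le_mul_of_nonneg_right hlpq hQ.le]

end Uniqueness

lemma eq_of_nehariFn_eq_zero {a α β : ℤ → ℝ} {p : ℕ} {q r : ℝ} (hp : 1 ≤ p)
    (hpq : (p : ℝ) < q) (hr : 0 < r) (ha : ∀ n, 0 ≤ a n) (hα : ∀ n, 0 ≤ α n)
    (hβ : ∀ n, 0 ≤ β n) (hA : Summable fun n => a n * (α n + β n) ^ p) {B C B' C' : ℝ}
    (hB : 0 < B) (hC : 0 < C) (hB' : 0 < B') (hC' : 0 < C') (D D' : ℝ) {s₁ t₁ s₂ t₂ : ℝ}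
    (hs₁ : 0 < s₁) (ht₁ : 0 < t₁) (hs₂ : 0 < s₂) (ht₂ : 0 < t₂)
    (hF₁ : nehariFn a α β p q r B C D s₁ t₁ = 0) (hG₁ : nehariFn a β α p q r B' C' D' t₁ s₁ = 0)
    (hF₂ : nehariFn a α β p q r B C D s₂ t₂ = 0) (hG₂ : nehariFn a β α p q r B' C' D' t₂ s₂ = 0) :
    s₁ = s₂ ∧ t₁ = t₂ := by
  have hA' : Summable fun n => a n * (β n + α n) ^ p := hA.congr fun n => by rw [add_comm]
  have key : ∀ {s₁ t₁ s₂ t₂ : ℝ}, 0 < s₁ → 0 < t₁ → 0 < s₂ → 0 < t₂ →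
      nehariFn a α β p q r B C D s₁ t₁ = 0 → nehariFn a β α p q r B' C' D' t₁ s₁ = 0 →
      nehariFn a α β p q r B C D s₂ t₂ = 0 → nehariFn a β α p q r B' C' D' t₂ s₂ = 0 →
      t₂ * s₁ ≤ t₁ * s₂ → s₁ = s₂ ∧ t₁ = t₂ := by
    intro s₁ t₁ s₂ t₂ hs₁ ht₁ hs₂ ht₂ hF₁ hG₁ hF₂ hG₂ h
    have hs : s₂ ≤ s₁ := le_of_nehariFn_eq_zero hp hpq hr ha hα hβ hA hB hC D hs₁ ht₁ ht₂ hF₁ hF₂ h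
    have ht : t₁ ≤ t₂ := le_of_nehariFn_eq_zero hp hpq hr ha hβ hα hA' hB' hC' D' ht₂ hs₂ hs₁ hG₂
      hG₁ (by linarith)
    constructor <;> nlinarith
  rcases le_total (t₂ * s₁) (t₁ * s₂) with h | h
  · exact key hs₁ ht₁ hs₂ ht₂ hF₁ hG₁ hF₂ hG₂ h
  · obtain ⟨hs, ht⟩ := key hs₂ ht₂ hs₁ ht₁ hF₂ hG₂ hF₁ hG₁ h
    exact ⟨hs.symm, ht.symm⟩

lemma tendsto_rpow_mul_log_add_nhdsGT_zero {e : ℝ} (he : 0 < e) (A D : ℝ) :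
    Tendsto (fun x => x ^ e * (A * log x + D)) (𝓝[>] 0) (𝓝 0) := by
  have hpow : Tendsto (fun x : ℝ => x ^ e) (𝓝[>] 0) (𝓝 0) := by
    simpa [Real.zero_rpow he.ne'] using
      (Real.continuousAt_rpow_const 0 e (.inr he.le)).tendsto.mono_left nhdsWithin_le_nhds
  simpa [mul_add, mul_comm, mul_left_comm] using
    ((tendsto_log_mul_rpow_nhdsGT_zero he).const_mul A).add (hpow.const_mul D)

lemma tendsto_rpow_mul_log_add_atTop {e : ℝ} (he : 0 < e) {A : ℝ} (hA : 0 < A) (D : ℝ) :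
    Tendsto (fun x => x ^ e * (A * log x + D)) atTop atTop :=
  (tendsto_rpow_atTop he).atTop_mul_atTop₀
    (tendsto_atTop_add_const_right _ D (tendsto_log_atTop.const_mul_atTop hA))

def powLogFn (p : ℕ) (q K A D x : ℝ) : ℝ := K * x ^ p - x ^ q * (A * log x + D)

section PowLog

variable {p : ℕ} {q : ℝ} (K A D : ℝ)

lemma powLogFn_eq_pow_mul {x : ℝ} (hx : 0 < x) :
    powLogFn p q K A D x = x ^ p * (K - x ^ (q - p) * (A * log x + D)) := by
  rw [powLogFn, Real.rpow_sub hx, Real.rpow_natCast]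
  field_simp

lemma powLogFn_zero (hp : p ≠ 0) (hq : q ≠ 0) : powLogFn p q K A D 0 = 0 := by
  simp [powLogFn, hp, Real.zero_rpow hq]

lemma continuousOn_powLogFn (hq : 1 < q) : ContinuousOn (powLogFn p q K A D) (Ici 0) := by
  have hcont : Continuous fun x : ℝ => K * x ^ p - x ^ (q - 1) * (A * (x * log x) + D * x) :=
    (continuous_const.mul (continuous_pow p)).sub
      ((Real.continuous_rpow_const (by linarith)).mul
        ((continuous_const.mul Real.continuous_mul_log).add (continuous_const.mul continuous_id)))
  refine hcont.continuousOn.congr fun x (hx : 0 ≤ x) => ?_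
  rcases hx.eq_or_lt with rfl | hx
  · simp [powLogFn, Real.zero_rpow (by linarith : q ≠ 0),
      Real.zero_rpow (by linarith : q - 1 ≠ 0)]
  · dsimp only
    rw [powLogFn, Real.rpow_sub_one hx.ne']
    field_simp

lemma tendsto_powLogFn_atTop (hp : p ≠ 0) (hpq : (p : ℝ) < q) {A : ℝ} (hA : 0 < A) :
    Tendsto (powLogFn p q K A D) atTop atBot := by
  have h : Tendsto (fun x => K - x ^ (q - p) * (A * log x + D)) atTop atBot :=
    tendsto_atBot_add_const_left _ K
      (tendsto_neg_atTop_atBot.comp (tendsto_rpow_mul_log_add_atTop (by linarith) hA D))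
  refine ((tendsto_pow_atTop hp).atTop_mul_atBot₀ h).congr' ?_
  filter_upwards [eventually_gt_atTop 0] with x hx
  rw [powLogFn_eq_pow_mul K A D hx]

lemma eventually_pos_powLogFn (hpq : (p : ℝ) < q) {K : ℝ} (hK : 0 < K) :
    ∀ᶠ x in 𝓝[>] 0, 0 < powLogFn p q K A D x := by
  have hp : (0 : ℝ) < q - p := by linarith
  filter_upwards [(tendsto_rpow_mul_log_add_nhdsGT_zero hp A D).eventually_lt_const hK,
    self_mem_nhdsWithin] with x hx (hx0 : 0 < x)
  rw [powLogFn_eq_pow_mul K A D hx0]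
  exact mul_pos (pow_pos hx0 p) (by linarith)

lemma bddAbove_powLogFn (hp : p ≠ 0) (hpq : (p : ℝ) < q) {A : ℝ} (hA : 0 < A) :
    BddAbove (powLogFn p q K A D '' Ici 0) := by
  have hq : 1 < q := by
    have : (1 : ℝ) ≤ p := by exact_mod_cast Nat.one_le_iff_ne_zero.2 hp
    linarith
  obtain ⟨R, hR⟩ :=
    eventually_atTop.1 ((tendsto_powLogFn_atTop K D hp hpq hA).eventually_le_atBot 0)
  obtain ⟨M, hM⟩ := isCompact_Icc.bddAbove_image
    ((continuousOn_powLogFn K A D hq).mono (Icc_subset_Ici_self : Icc 0 R ⊆ Ici 0))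
  refine ⟨max M 0, ?_⟩
  rintro _ ⟨x, hx, rfl⟩
  rcases le_total x R with h | h
  · exact (hM ⟨x, ⟨hx, h⟩, rfl⟩).trans (le_max_left _ _)
  · exact (hR x h).trans (le_max_right _ _)

lemma hasDerivAt_powLogFn {x : ℝ} (hx : 0 < x) :
    HasDerivAt (powLogFn p q K A D)
      ((p * K * x ^ p - x ^ q * (q * A * log x + q * D + A)) / x) x := by
  have hlin : HasDerivAt (fun x => A * log x + D) (A * x⁻¹) x :=
    ((Real.hasDerivAt_log hx.ne').const_mul A).add_const D
  refine (((hasDerivAt_pow p x).const_mul K).sub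
    ((Real.hasDerivAt_rpow_const (p := q) (.inl hx.ne')).mul hlin)).congr_deriv ?_
  have hpow : (p : ℝ) * x ^ (p - 1) * x = p * x ^ p := by
    rcases p with _ | k
    · simp
    · rw [Nat.add_sub_cancel, mul_assoc, ← pow_succ]
  rw [Real.rpow_sub_one hx.ne']
  field_simp
  linear_combination K * hpow

end PowLog

lemma exists_isLocalMax_of_boundary (Φ : ℝ → ℝ → ℝ)
    (hcont : ∀ R, ContinuousOn (fun z : ℝ × ℝ => Φ z.1 z.2) (Icc 0 R ×ˢ Icc 0 R))
    (hfar : ∀ V, ∃ R, ∀ s t, 0 ≤ s → 0 ≤ t → (R ≤ s ∨ R ≤ t) → Φ s t < V)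
    (hleft : ∀ t, 0 ≤ t → ∀ᶠ s in 𝓝[>] 0, Φ 0 t < Φ s t)
    (hbot : ∀ s, 0 ≤ s → ∀ᶠ t in 𝓝[>] 0, Φ s 0 < Φ s t) :
    ∃ s t, 0 < s ∧ 0 < t ∧ IsLocalMax (fun x => Φ x t) s ∧ IsLocalMax (fun y => Φ s y) t := by
  obtain ⟨R, hR⟩ := hfar (Φ 1 1)
  have hR1 : 1 < R := by
    by_contra! h
    exact lt_irrefl _ (hR 1 1 zero_le_one zero_le_one (.inl h))
  have hR0 : (0 : ℝ) < R := by linarith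
  obtain ⟨⟨s, t⟩, ⟨⟨hs0, hsR⟩, ht0, htR⟩, hmax⟩ := (isCompact_Icc.prod isCompact_Icc).exists_isMaxOn
    ⟨(1, 1), ⟨⟨zero_le_one, hR1.le⟩, zero_le_one, hR1.le⟩⟩ (hcont R)
  have hle : ∀ x y, x ∈ Icc 0 R → y ∈ Icc 0 R → Φ x y ≤ Φ s t := fun x y hx hy =>
    hmax (mk_mem_prod hx hy)
  have h11 := hle 1 1 ⟨zero_le_one, hR1.le⟩ ⟨zero_le_one, hR1.le⟩
  have hsR' : s < R := lt_of_le_of_ne hsR fun h => (hR s t hs0 ht0 (.inl h.ge)).not_ge h11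
  have htR' : t < R := lt_of_le_of_ne htR fun h => (hR s t hs0 ht0 (.inr h.ge)).not_ge h11
  have hs : 0 < s := by
    refine lt_of_le_of_ne hs0 fun h => ?_
    subst h
    obtain ⟨x, hx, hx0, hxR⟩ := ((hleft t ht0).and (Ioo_mem_nhdsGT hR0)).exists
    exact (hx.trans_le (hle x t ⟨hx0.le, hxR.le⟩ ⟨ht0, htR⟩)).false
  have ht : 0 < t := by
    refine lt_of_le_of_ne ht0 fun h => ?_
    subst h
    obtain ⟨y, hy, hy0, hyR⟩ := ((hbot s hs0).and (Ioo_mem_nhdsGT hR0)).exists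
    exact (hy.trans_le (hle s y ⟨hs0, hsR⟩ ⟨hy0.le, hyR.le⟩)).false
  have hloc : IsLocalMax (fun z : ℝ × ℝ => Φ z.1 z.2) (s, t) :=
    Filter.mem_of_superset (prod_mem_nhds (Icc_mem_nhds hs hsR') (Icc_mem_nhds ht htR'))
      fun z hz => hmax hz
  exact ⟨s, t, hs, ht,
    hloc.comp_continuous (g := fun x => (x, t))
      (continuous_id.prodMk continuous_const).continuousAt,
    hloc.comp_continuous (g := fun y => (s, y))
      (continuous_const.prodMk continuous_id).continuousAt⟩

lemma exists_forall_add_lt_of_tendsto_atBot {f g : ℝ → ℝ} (hf : BddAbove (f '' Ici 0))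
    (hg : BddAbove (g '' Ici 0)) (hf' : Tendsto f atTop atBot) (hg' : Tendsto g atTop atBot)
    (V : ℝ) : ∃ R, ∀ s t, 0 ≤ s → 0 ≤ t → (R ≤ s ∨ R ≤ t) → f s + g t < V := by
  obtain ⟨Mf, hMf⟩ := hf
  obtain ⟨Mg, hMg⟩ := hg
  obtain ⟨R₁, hR₁⟩ := eventually_atTop.1 (hf'.eventually_lt_atBot (V - Mg))
  obtain ⟨R₂, hR₂⟩ := eventually_atTop.1 (hg'.eventually_lt_atBot (V - Mf))
  refine ⟨max R₁ R₂, fun s t hs ht h => ?_⟩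
  have hfs := hMf ⟨s, hs, rfl⟩
  have hgt := hMg ⟨t, ht, rfl⟩
  rcases h with h | h
  · linarith [hR₁ s (le_of_max_le_left h)]
  · linarith [hR₂ t (le_of_max_le_right h)]

section Energy

variable {a α β : ℤ → ℝ} {p : ℕ} (hp : 1 ≤ p) (ha : ∀ n, 0 ≤ a n) (hα : ∀ n, 0 ≤ α n)
  (hβ : ∀ n, 0 ≤ β n) (hA : Summable fun n => a n * (α n + β n) ^ p)
include hp ha hα hβ hA

lemma summable_mul_add_pow {x y : ℝ} (hx : 0 ≤ x) (hy : 0 ≤ y) :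
    Summable fun n => a n * (x * α n + y * β n) ^ p := by
  have hA' : Summable fun n => a n * (β n + α n) ^ p := hA.congr fun n => by rw [add_comm]
  refine (((summable_mul_pow_mul hp ha hα hβ hA hx hy).mul_left x).add
    ((summable_mul_pow_mul hp ha hβ hα hA' hy hx).mul_left y)).congr fun n => ?_
  rw [← pow_sub_one_mul (by omega : p ≠ 0) (x * α n + y * β n), add_comm (y * β n)]
  ring

lemma hasDerivAt_tsum_mul_add_pow {s t : ℝ} (hs : 0 < s) (ht : 0 ≤ t) :
    HasDerivAt (fun x => ∑' n, a n * (x * α n + t * β n) ^ p)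
      (p * ∑' n, a n * (s * α n + t * β n) ^ (p - 1) * α n) s := by
  rw [← tsum_mul_left]
  refine hasDerivAt_tsum_of_isPreconnected (t := Ioo 0 (s + 1))
    (g := fun n x => a n * (x * α n + t * β n) ^ p)
    (g' := fun n x => p * (a n * (x * α n + t * β n) ^ (p - 1) * α n))
    (((summable_mul_pow_mul hp ha hα hβ hA (x := s + 1) (by linarith) ht)).mul_left (p : ℝ))
    isOpen_Ioo isPreconnected_Ioo (fun n x _ => ?_) (fun n x hx => ?_)
    ⟨hs, by linarith⟩ (summable_mul_add_pow hp ha hα hβ hA hs.le ht) ⟨hs, by linarith⟩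
  · exact ((((hasDerivAt_mul_const (α n)).add_const (t * β n)).pow p).const_mul (a n)).congr_deriv
      (by ring)
  · have := ha n; have := hα n; have := hβ n; have := hx.1.le
    rw [Real.norm_eq_abs, abs_of_nonneg (by positivity)]
    gcongr
    exact hx.2.le

lemma continuousOn_tsum_mul_add_pow (R : ℝ) :
    ContinuousOn (fun z : ℝ × ℝ => ∑' n, a n * (z.1 * α n + z.2 * β n) ^ p)
      (Icc 0 R ×ˢ Icc 0 R) := by
  rcases lt_or_ge R 0 with hR | hR
  · simp [Icc_eq_empty_of_lt hR]
  refine continuousOn_tsum (fun n => by fun_prop) (summable_mul_add_pow hp ha hα hβ hA hR hR)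
    fun n z hz => ?_
  have := ha n; have := hα n; have := hβ n
  obtain ⟨⟨hz1, hz1R⟩, hz2, hz2R⟩ := hz
  rw [Real.norm_eq_abs, abs_of_nonneg (by positivity)]
  gcongr

lemma tsum_mul_add_pow_le {s t : ℝ} (hs : 0 ≤ s) (ht : 0 ≤ t) :
    ∑' n, a n * (s * α n + t * β n) ^ p ≤ (s ^ p + t ^ p) * ∑' n, a n * (α n + β n) ^ p := by
  rw [← tsum_mul_left]
  refine Summable.tsum_le_tsum (fun n => ?_) (summable_mul_add_pow hp ha hα hβ hA hs ht)
    (hA.mul_left _)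
  have := ha n; have := hα n; have := hβ n
  have hmax : max s t ^ p ≤ s ^ p + t ^ p := by
    rcases le_total s t with h | h
    · rw [max_eq_right h]; have := pow_nonneg hs p; linarith
    · rw [max_eq_left h]; have := pow_nonneg ht p; linarith
  calc a n * (s * α n + t * β n) ^ p ≤ a n * (max s t * (α n + β n)) ^ p := by
        gcongr
        exact add_mul_le_max_mul s t (hα n) (hβ n)
    _ = max s t ^ p * (a n * (α n + β n) ^ p) := by rw [mul_pow]; ring
    _ ≤ (s ^ p + t ^ p) * (a n * (α n + β n) ^ p) := by gcongr

lemma tsum_mul_add_pow_mono {s t : ℝ} (hs : 0 ≤ s) (ht : 0 ≤ t) :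
    ∑' n, a n * (0 * α n + t * β n) ^ p ≤ ∑' n, a n * (s * α n + t * β n) ^ p := by
  refine Summable.tsum_le_tsum (fun n => ?_) (summable_mul_add_pow hp ha hα hβ hA le_rfl ht)
    (summable_mul_add_pow hp ha hα hβ hA hs ht)
  have := ha n; have := hα n; have := hβ n
  gcongr

end Energy

/-- `I(s v + t v')` in the notation of `nehariFn`; the `c |w|^q` term of `I` is what shifts `D`
to `D - r C / q`. -/
def fibreEnergy (a α β : ℤ → ℝ) (p : ℕ) (q r B C D B' C' D' s t : ℝ) : ℝ :=
  (∑' n, a n * (s * α n + t * β n) ^ p) / p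
    + powLogFn p q (B / p) (r * C / q) ((D - r * C / q) / q) s
    + powLogFn p q (B' / p) (r * C' / q) ((D' - r * C' / q) / q) t

section Existence

variable {a α β : ℤ → ℝ} {p : ℕ} {q r : ℝ}

lemma fibreEnergy_comm (B C D B' C' D' s t : ℝ) :
    fibreEnergy a α β p q r B C D B' C' D' s t = fibreEnergy a β α p q r B' C' D' B C D t s := by
  simp only [fibreEnergy, add_comm (s * α _)]
  ring

variable (hp : 1 ≤ p) (ha : ∀ n, 0 ≤ a n) (hα : ∀ n, 0 ≤ α n) (hβ : ∀ n, 0 ≤ β n)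
  (hA : Summable fun n => a n * (α n + β n) ^ p)
include hp ha hα hβ hA

lemma hasDerivAt_fibreEnergy (hq : q ≠ 0) (B C D B' C' D' : ℝ) {s t : ℝ} (hs : 0 < s) (ht : 0 ≤ t) :
    HasDerivAt (fun x => fibreEnergy a α β p q r B C D B' C' D' x t)
      (nehariFn a α β p q r B C D s t / s) s := by
  refine ((((hasDerivAt_tsum_mul_add_pow hp ha hα hβ hA hs ht).div_const p).add
    (hasDerivAt_powLogFn _ _ _ hs)).add_const _).congr_deriv ?_
  have hmix : ∑' n, a n * (s * α n + t * β n) ^ (p - 1) * (s * α n)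
      = s * ∑' n, a n * (s * α n + t * β n) ^ (p - 1) * α n := by
    rw [← tsum_mul_left]
    exact tsum_congr fun n => by ring
  have hp0 : (p : ℝ) ≠ 0 := by positivity
  rw [nehariFn, hmix]
  field_simp
  ring

lemma continuousOn_fibreEnergy (hq : 1 < q) (B C D B' C' D' R : ℝ) :
    ContinuousOn (fun z : ℝ × ℝ => fibreEnergy a α β p q r B C D B' C' D' z.1 z.2)
      (Icc 0 R ×ˢ Icc 0 R) :=
  (((continuousOn_tsum_mul_add_pow hp ha hα hβ hA R).div_const _).add
    ((continuousOn_powLogFn _ _ _ hq).comp continuousOn_fst fun _ hz => hz.1.1)).add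
    ((continuousOn_powLogFn _ _ _ hq).comp continuousOn_snd fun _ hz => hz.2.1)

lemma fibreEnergy_le (B C D B' C' D' : ℝ) {s t : ℝ} (hs : 0 ≤ s) (ht : 0 ≤ t) :
    fibreEnergy a α β p q r B C D B' C' D' s t ≤
      powLogFn p q ((B + ∑' n, a n * (α n + β n) ^ p) / p) (r * C / q) ((D - r * C / q) / q) s
        + powLogFn p q ((B' + ∑' n, a n * (α n + β n) ^ p) / p) (r * C' / q)
          ((D' - r * C' / q) / q) t := by
  have h := div_le_div_of_nonneg_right (tsum_mul_add_pow_le hp ha hα hβ hA hs ht)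
    (Nat.cast_nonneg (α := ℝ) p)
  simp only [fibreEnergy, powLogFn]
  rw [add_div B, add_div B', add_mul, add_mul]
  linarith [show (s ^ p + t ^ p) * (∑' n, a n * (α n + β n) ^ p) / p
    = (∑' n, a n * (α n + β n) ^ p) / p * s ^ p + (∑' n, a n * (α n + β n) ^ p) / p * t ^ p by ring]

lemma eventually_fibreEnergy_zero_lt (hpq : (p : ℝ) < q) {B : ℝ} (hB : 0 < B)
    (C D B' C' D' : ℝ) {t : ℝ} (ht : 0 ≤ t) :
    ∀ᶠ s in 𝓝[>] 0, fibreEnergy a α β p q r B C D B' C' D' 0 t <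
      fibreEnergy a α β p q r B C D B' C' D' s t := by
  have hp0 : (0 : ℝ) < p := by exact_mod_cast hp
  filter_upwards [eventually_pos_powLogFn (r * C / q) ((D - r * C / q) / q) hpq
    (K := B / p) (by positivity), self_mem_nhdsWithin] with s hpos (hs : 0 < s)
  have h := div_le_div_of_nonneg_right (tsum_mul_add_pow_mono hp ha hα hβ hA hs.le ht) hp0.le
  simp only [fibreEnergy]
  rw [powLogFn_zero _ _ _ (by omega) (by linarith)]
  linarith

theorem exists_nehariFn_eq_zero (hpq : (p : ℝ) < q) (hr : 0 < r) {B C B' C' : ℝ} (hB : 0 < B)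
    (hC : 0 < C) (hB' : 0 < B') (hC' : 0 < C') (D D' : ℝ) :
    ∃ s t, 0 < s ∧ 0 < t ∧ nehariFn a α β p q r B C D s t = 0 ∧
      nehariFn a β α p q r B' C' D' t s = 0 := by
  have hq : 1 < q := by linarith [(Nat.one_le_cast (α := ℝ)).2 hp]
  have hp0 : p ≠ 0 := by omega
  have hA' : Summable fun n => a n * (β n + α n) ^ p := hA.congr fun n => by rw [add_comm]
  have hfar : ∀ V, ∃ R, ∀ s t, 0 ≤ s → 0 ≤ t → (R ≤ s ∨ R ≤ t) →
      fibreEnergy a α β p q r B C D B' C' D' s t < V := fun V => by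
    obtain ⟨R, hR⟩ := exists_forall_add_lt_of_tendsto_atBot
      (bddAbove_powLogFn _ _ hp0 hpq (by positivity : 0 < r * C / q))
      (bddAbove_powLogFn _ _ hp0 hpq (by positivity : 0 < r * C' / q))
      (tendsto_powLogFn_atTop _ _ hp0 hpq (by positivity))
      (tendsto_powLogFn_atTop _ _ hp0 hpq (by positivity)) V
    exact ⟨R, fun s t hs ht h => (fibreEnergy_le hp ha hα hβ hA _ _ _ _ _ _ hs ht).trans_lt
      (hR s t hs ht h)⟩
  obtain ⟨s, t, hs, ht, hmax_s, hmax_t⟩ := exists_isLocalMax_of_boundary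
    (fibreEnergy a α β p q r B C D B' C' D')
    (continuousOn_fibreEnergy hp ha hα hβ hA hq _ _ _ _ _ _)
    hfar (fun t ht => eventually_fibreEnergy_zero_lt hp ha hα hβ hA hpq hB _ _ _ _ _ ht)
    (fun s hs => by
      simpa only [fibreEnergy_comm (α := α)] using
        eventually_fibreEnergy_zero_lt hp ha hβ hα hA' hpq hB' C' D' B C D hs)
  refine ⟨s, t, hs, ht, ?_, ?_⟩
  · simpa [hs.ne'] using hmax_s.hasDerivAt_eq_zero
      (hasDerivAt_fibreEnergy hp ha hα hβ hA (by linarith) B C D B' C' D' hs ht.le)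
  · simp only [fibreEnergy_comm (α := α)] at hmax_t
    simpa [ht.ne'] using hmax_t.hasDerivAt_eq_zero
      (hasDerivAt_fibreEnergy hp ha hβ hα hA' (by linarith) B' C' D' B C D ht hs.le)

end Existence

theorem existsUnique_nehariFn_eq_zero {a α β : ℤ → ℝ} {p : ℕ} {q r : ℝ} (hp : 1 ≤ p)
    (hpq : (p : ℝ) < q) (hr : 0 < r) (ha : ∀ n, 0 ≤ a n) (hα : ∀ n, 0 ≤ α n)
    (hβ : ∀ n, 0 ≤ β n) (hA : Summable fun n => a n * (α n + β n) ^ p) {B C B' C' : ℝ}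
    (hB : 0 < B) (hC : 0 < C) (hB' : 0 < B') (hC' : 0 < C') (D D' : ℝ) :
    ∃! st : ℝ × ℝ, 0 < st.1 ∧ 0 < st.2 ∧ nehariFn a α β p q r B C D st.1 st.2 = 0 ∧
      nehariFn a β α p q r B' C' D' st.2 st.1 = 0 := by
  obtain ⟨s, t, hs, ht, hF, hG⟩ :=
    exists_nehariFn_eq_zero hp ha hα hβ hA hpq hr hB hC hB' hC' D D'
  refine ⟨(s, t), ⟨hs, ht, hF, hG⟩, fun ⟨s', t'⟩ ⟨hs', ht', hF', hG'⟩ => ?_⟩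
  obtain ⟨rfl, rfl⟩ :=
    eq_of_nehariFn_eq_zero hp hpq hr ha hα hβ hA hB hC hB' hC' D D' hs' ht' hs ht hF' hG' hF hG
  rfl

section Sequences

variable {a b c : ℤ → ℝ} {p : ℕ} {q r : ℝ} {u v : ℤ → ℝ}

lemma rpow_le_exp_add_abs_mul_log {x : ℝ} (hx : 0 ≤ x) (hq : 0 ≤ q) (hr : 1 ≤ r) :
    x ^ q ≤ exp q + |x ^ q * log (x ^ r)| := by
  rcases le_total x (exp 1) with h | h
  · have := (Real.rpow_le_rpow hx h hq).trans_eq (Real.exp_one_rpow q)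
    linarith [abs_nonneg (x ^ q * log (x ^ r))]
  · have hx0 : 0 < x := (exp_pos 1).trans_le h
    have hlog : 1 ≤ log (x ^ r) := by
      rw [Real.log_rpow hx0]
      nlinarith [(Real.le_log_iff_exp_le hx0).2 h]
    have := le_mul_of_one_le_right (Real.rpow_nonneg hx q) hlog
    linarith [le_abs_self (x ^ q * log (x ^ r)), exp_pos q]

lemma summable_mul_abs_rpow (hc : ∀ n, 0 ≤ c n) (hcsum : Summable c) (hq : 0 ≤ q) (hr : 1 ≤ r)
    (hv : Summable (logSummand c q r v)) : Summable fun n => c n * |v n| ^ q := by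
  refine Summable.of_nonneg_of_le (fun n => mul_nonneg (hc n) (by positivity)) (fun n => ?_)
    ((hcsum.mul_left (exp q)).add hv.abs)
  have h := mul_le_mul_of_nonneg_left (rpow_le_exp_add_abs_mul_log (abs_nonneg (v n)) hq hr) (hc n)
  rw [logSummand, mul_assoc, abs_mul (c n), abs_of_nonneg (hc n)]
  linarith

lemma summable_logSummand_of_eq_zero_or_eq (hv : ∀ n, v n = 0 ∨ v n = u n)
    (hu : Summable (logSummand c q r u)) : Summable (logSummand c q r v) :=
  hu.abs.of_norm_bounded fun n => by
    rcases hv n with h | h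
    · simp [logSummand_of_eq_zero c q r h]
    · simp [logSummand, h]

lemma summable_mul_abs_dlt_pow (ha : ∀ n, 0 ≤ a n) (hb : ∀ n, 0 ≤ b n) (hu : memE a b p u) :
    Summable fun n => a n * |dlt u n| ^ p :=
  hu.of_nonneg_of_le (fun n => mul_nonneg (ha n) (by positivity))
    fun n => le_add_of_nonneg_right (mul_nonneg (hb n) (by positivity))

lemma summable_mul_abs_pow (ha : ∀ n, 0 ≤ a n) (hb : ∀ n, 0 ≤ b n) (hu : memE a b p u) :
    Summable fun n => b n * |u n| ^ p :=
  hu.of_nonneg_of_le (fun n => mul_nonneg (hb n) (by positivity))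
    fun n => le_add_of_nonneg_left (mul_nonneg (ha n) (by positivity))

lemma summable_mul_abs_pow_of_eq_zero_or_eq (hb : ∀ n, 0 ≤ b n) (hv : ∀ n, v n = 0 ∨ v n = u n)
    (hu : Summable fun n => b n * |u n| ^ p) : Summable fun n => b n * |v n| ^ p :=
  hu.of_nonneg_of_le (fun n => mul_nonneg (hb n) (by positivity))
    fun n => mul_le_mul_of_nonneg_left (pow_le_pow_left₀ (abs_nonneg _)
      (abs_le_of_eq_zero_or_eq (hv n)) p) (hb n)

lemma summable_of_memD_of_eq_zero_or_eq (ha : ∀ n, 0 ≤ a n) (hb : ∀ n, 0 ≤ b n)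
    (hc : ∀ n, 0 ≤ c n) (hcsum : Summable c) (hq : 0 ≤ q) (hr : 1 ≤ r) (hu : memD a b c p q r u)
    (hv : ∀ n, v n = 0 ∨ v n = u n) :
    Summable (fun n => b n * |v n| ^ p) ∧ Summable (fun n => c n * |v n| ^ q) ∧
      Summable (logSummand c q r v) := by
  have hD := summable_logSummand_of_eq_zero_or_eq hv hu.2
  exact ⟨summable_mul_abs_pow_of_eq_zero_or_eq hb hv (summable_mul_abs_pow ha hb hu.1),
    summable_mul_abs_rpow hc hcsum hq hr hD, hD⟩

lemma tsum_mul_pos_of_ne_zero {g : ℝ → ℝ} (hb : ∀ n, 0 < b n) (hg : ∀ x, 0 ≤ g x)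
    (hg0 : ∀ x, x ≠ 0 → 0 < g x) (hv : v ≠ 0) (hsum : Summable fun n => b n * g (v n)) :
    0 < ∑' n, b n * g (v n) := by
  obtain ⟨n, hn⟩ := Function.ne_iff.1 hv
  exact hsum.tsum_pos (fun n => mul_nonneg (hb n).le (hg _)) n (mul_pos (hb n) (hg0 _ hn))

lemma abs_smul_add_smul_le {x y s t : ℝ} (hxy : 0 ≤ x * y) (hs : 0 ≤ s) (ht : 0 ≤ t) :
    |s * x + t * y| ≤ max s t * |x + y| := by
  have hst : 0 ≤ s * x * (t * y) := by
    rw [mul_mul_mul_comm]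
    exact mul_nonneg (mul_nonneg hs ht) hxy
  rw [abs_add_of_mul_nonneg hst, abs_add_of_mul_nonneg hxy, abs_mul, abs_mul, abs_of_nonneg hs,
    abs_of_nonneg ht]
  exact add_mul_le_max_mul s t (abs_nonneg x) (abs_nonneg y)

lemma memE_smul_pos_add_smul_neg (ha : ∀ n, 0 ≤ a n) (hb : ∀ n, 0 ≤ b n) (hu : memE a b p u)
    {s t : ℝ} (hs : 0 ≤ s) (ht : 0 ≤ t) : memE a b p (fun n => s * pos u n + t * neg u n) := by
  refine (hu.mul_left (max s t ^ p)).of_nonneg_of_le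
    (fun n => add_nonneg (mul_nonneg (ha n) (by positivity)) (mul_nonneg (hb n) (by positivity)))
    fun n => ?_
  have hdlt : |dlt (fun n => s * pos u n + t * neg u n) n| ≤ max s t * |dlt u n| := by
    have h := abs_smul_add_smul_le (dlt_pos_mul_dlt_neg_nonneg u n) hs ht
    have hsum : dlt (pos u) n + dlt (neg u) n = dlt u n := by simp only [dlt, ← pos_add_neg u]; ring
    rw [hsum] at h
    convert h using 2
    simp only [dlt]
    ring
  have hval : |s * pos u n + t * neg u n| ≤ max s t * |u n| := by
    have hxy : 0 ≤ pos u n * neg u n := by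
      rcases pos_eq_zero_or_neg_eq_zero u n with h | h <;> simp [h]
    simpa only [pos_add_neg] using abs_smul_add_smul_le hxy hs ht
  calc nsum a b p (fun n => s * pos u n + t * neg u n) n
      ≤ a n * (max s t * |dlt u n|) ^ p + b n * (max s t * |u n|) ^ p := by
        unfold nsum
        have := ha n; have := hb n
        gcongr
    _ = max s t ^ p * nsum a b p u n := by
        rw [nsum, mul_pow, mul_pow]
        ring

lemma summable_logSummand_smul_pos_add_smul_neg (hq : q ≠ 0) {s t : ℝ} (hs : 0 < s) (ht : 0 < t)
    (hCp : Summable fun n => c n * |pos u n| ^ q) (hDp : Summable (logSummand c q r (pos u)))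
    (hCm : Summable fun n => c n * |neg u n| ^ q) (hDm : Summable (logSummand c q r (neg u))) :
    Summable (logSummand c q r (fun n => s * pos u n + t * neg u n)) := by
  refine ((((hCp.mul_left (r * log s)).add hDp).mul_left (s ^ q)).add
    (((hCm.mul_left (r * log t)).add hDm).mul_left (t ^ q))).congr fun n => ?_
  rw [← logSummand_smul c hq r hs, ← logSummand_smul c hq r ht]
  rcases pos_eq_zero_or_neg_eq_zero u n with h | h
  · rw [logSummand_of_eq_zero c q r (v := fun n => s * pos u n) (by simp [h]), zero_add]
    simp [logSummand, h]
  · rw [logSummand_of_eq_zero c q r (v := fun n => t * neg u n) (by simp [h]), add_zero]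
    simp [logSummand, h]

end Sequences

lemma smul_pos_add_smul_neg_mem_Mset_iff {a b c : ℤ → ℝ} {p : ℕ} {q r : ℝ} (hp : 2 ≤ p)
    (hq : q ≠ 0) (ha : ∀ n, 0 ≤ a n) (hb : ∀ n, 0 ≤ b n) {u : ℤ → ℝ} (hu : memE a b p u)
    (hup : pos u ≠ 0) (hum : neg u ≠ 0)
    (hA : Summable fun n => a n * (|dlt (pos u) n| + |dlt (neg u) n|) ^ p)
    (hBp : Summable fun n => b n * |pos u n| ^ p) (hCp : Summable fun n => c n * |pos u n| ^ q)
    (hDp : Summable (logSummand c q r (pos u)))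
    (hBm : Summable fun n => b n * |neg u n| ^ p) (hCm : Summable fun n => c n * |neg u n| ^ q)
    (hDm : Summable (logSummand c q r (neg u))) {s t : ℝ} (hs : 0 < s) (ht : 0 < t) :
    (fun n => s * pos u n + t * neg u n) ∈ Mset a b c p q r ↔
      nehariFn a (fun n => |dlt (pos u) n|) (fun n => |dlt (neg u) n|) p q r
          (∑' n, b n * |pos u n| ^ p) (∑' n, c n * |pos u n| ^ q)
          (∑' n, logSummand c q r (pos u) n) s t = 0 ∧
        nehariFn a (fun n => |dlt (neg u) n|) (fun n => |dlt (pos u) n|) p q r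
          (∑' n, b n * |neg u n| ^ p) (∑' n, c n * |neg u n| ^ q)
          (∑' n, logSummand c q r (neg u) n) t s = 0 := by
  have hdisj := pos_eq_zero_or_neg_eq_zero u
  have hF := pr_smul_add_smul a b c hp hq r ha hdisj (dlt_pos_mul_dlt_neg_nonneg u) hA hBp hCp hDp
    hs ht
  have hG := pr_smul_add_smul a b c hp hq r ha (fun n => (hdisj n).symm)
    (fun n => by rw [mul_comm]; exact dlt_pos_mul_dlt_neg_nonneg u n)
    (hA.congr fun n => by rw [add_comm]) hBm hCm hDm ht hs
  rw [show (fun n => t * neg u n + s * pos u n) = fun n => s * pos u n + t * neg u n from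
    funext fun n => add_comm _ _] at hG
  have hmem : memD a b c p q r (fun n => s * pos u n + t * neg u n) :=
    ⟨memE_smul_pos_add_smul_neg ha hb hu hs.le ht.le,
      summable_logSummand_smul_pos_add_smul_neg hq hs ht hCp hDp hCm hDm⟩
  have hpos : (fun n => s * pos u n) ≠ 0 := fun h =>
    hup (funext fun n => by simpa [hs.ne'] using congrFun h n)
  have hneg : (fun n => t * neg u n) ≠ 0 := fun h =>
    hum (funext fun n => by simpa [ht.ne'] using congrFun h n)
  simp only [Mset, mem_ofPred_eq, pos_smul_add_smul u hs.le ht.le, neg_smul_add_smul u hs.le ht.le,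
    hF, hG]
  exact ⟨fun h => h.2.2.2, fun h => ⟨hmem, hpos, hneg, h⟩⟩

theorem stmt11_general (p : ℕ) (hp2 : 2 ≤ p)
    (q r : ℝ) (hpq : (p : ℝ) < q) (hr : 1 ≤ r)
    (a b c : ℤ → ℝ)
    (ha : ∀ n, 0 < a n) (hb : ∀ n, 0 < b n) (hc : ∀ n, 0 < c n)
    (hcsum : Summable c)
    (u : ℤ → ℝ) (hu : memD a b c p q r u)
    (hup : pos u ≠ 0) (hum : neg u ≠ 0) :
    ∃! st : ℝ × ℝ, 0 < st.1 ∧ 0 < st.2 ∧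
      (fun n => st.1 * pos u n + st.2 * neg u n) ∈ Mset a b c p q r := by
  have hq : 0 < q := by
    have : (2 : ℝ) ≤ p := by exact_mod_cast hp2
    linarith
  have ha' := fun n => (ha n).le
  have hb' := fun n => (hb n).le
  have hA : Summable fun n => a n * (|dlt (pos u) n| + |dlt (neg u) n|) ^ p :=
    (summable_mul_abs_dlt_pow ha' hb' hu.1).congr fun n => by rw [abs_dlt_pos_add_abs_dlt_neg]
  obtain ⟨hBp, hCp, hDp⟩ := summable_of_memD_of_eq_zero_or_eq ha' hb' (fun n => (hc n).le) hcsum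
    hq.le hr hu (pos_eq_zero_or_eq u)
  obtain ⟨hBm, hCm, hDm⟩ := summable_of_memD_of_eq_zero_or_eq ha' hb' (fun n => (hc n).le) hcsum
    hq.le hr hu (neg_eq_zero_or_eq u)
  refine (existsUnique_congr fun st => and_congr_right fun hs => and_congr_right fun ht =>
    smul_pos_add_smul_neg_mem_Mset_iff hp2 hq.ne' ha' hb' hu.1 hup hum hA hBp hCp hDp hBm hCm hDm
      hs ht).2 ?_
  have hpow : ∀ x : ℝ, x ≠ 0 → 0 < |x| ^ p := fun x hx => pow_pos (abs_pos.2 hx) p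
  have hrpow : ∀ x : ℝ, x ≠ 0 → 0 < |x| ^ q := fun x hx => Real.rpow_pos_of_pos (abs_pos.2 hx) q
  exact existsUnique_nehariFn_eq_zero (by omega) hpq (by linarith) ha' (fun _ => abs_nonneg _)
    (fun _ => abs_nonneg _) hA
    (tsum_mul_pos_of_ne_zero hb (fun _ => by positivity) hpow hup hBp)
    (tsum_mul_pos_of_ne_zero hc (fun _ => by positivity) hrpow hup hCp)
    (tsum_mul_pos_of_ne_zero hb (fun _ => by positivity) hpow hum hBm)
    (tsum_mul_pos_of_ne_zero hc (fun _ => by positivity) hrpow hum hCm) _ _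

theorem stmt11 (p : ℕ) (hp2 : 2 ≤ p) (hpe : Even p)
    (q r : ℝ) (hpq : (p : ℝ) < q) (hr : 1 ≤ r)
    (a b c : ℤ → ℝ)
    (ha : ∀ n, 0 < a n) (hb : ∀ n, 0 < b n) (hc : ∀ n, 0 < c n)
    (b0 : ℝ) (hb0 : 0 < b0) (hbb : ∀ n, b0 ≤ b n)
    (hbinf : Tendsto b cofinite atTop)
    (c0 : ℝ) (hc0 : 0 < c0) (hcc : ∀ n, c n ≤ c0)
    (hcsum : Summable c)
    (u : ℤ → ℝ) (hu : memD a b c p q r u)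
    (hup : pos u ≠ 0) (hum : neg u ≠ 0) :
    ∃! st : ℝ × ℝ, 0 < st.1 ∧ 0 < st.2 ∧
      (fun n => st.1 * pos u n + st.2 * neg u n) ∈ Mset a b c p q r :=
  stmt11_general p hp2 q r hpq hr a b c ha hb hc hcsum u hu hup hum

end DPLap
end
end

section
/- There exist reals ρ > 0 and δ' > 0 such that I(u) ≥ δ' for every u ∈ 𝒟 with ‖u‖ = ρ. -/
noncomputable section

open Real Filter Set

namespace DPLap

theorem stmt16 (p : ℕ) (hp2 : 2 ≤ p) (hpe : Even p)
    (q r : ℝ) (hpq : (p : ℝ) < q) (hr : 1 ≤ r)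
    (a b c : ℤ → ℝ)
    (ha : ∀ n, 0 < a n) (hb : ∀ n, 0 < b n) (hc : ∀ n, 0 < c n)
    (b0 : ℝ) (hb0 : 0 < b0) (hbb : ∀ n, b0 ≤ b n)
    (hbinf : Tendsto b cofinite atTop)
    (c0 : ℝ) (hc0 : 0 < c0) (hcc : ∀ n, c n ≤ c0)
    (hcsum : Summable c) :
    ∃ ρ : ℝ, 0 < ρ ∧ ∃ δ' : ℝ, 0 < δ' ∧
      ∀ u : ℤ → ℝ, memD a b c p q r u → dnorm a b p u = ρ →
        δ' ≤ En a b c p q r u := by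

  have hpn : p ≠ 0 := by omega
  have hpR : ((p : ℝ)) ≠ 0 := by exact_mod_cast hpn
  have hppos : (0:ℝ) < p := by exact_mod_cast Nat.pos_of_ne_zero hpn
  have hq : (0:ℝ) < q := lt_trans hppos hpq
  set ρ : ℝ := min 1 (b0 ^ ((p:ℝ)⁻¹)) with hρdef
  have hρpos : 0 < ρ := lt_min one_pos (Real.rpow_pos_of_pos hb0 _)
  refine ⟨ρ, hρpos, (1/(p:ℝ)) * ρ ^ p, by positivity, ?_⟩
  intro u hu hnorm
  have hnn : ∀ n, 0 ≤ nsum a b p u n := fun n =>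
    add_nonneg (mul_nonneg (ha n).le (pow_nonneg (abs_nonneg _) _))
      (mul_nonneg (hb n).le (pow_nonneg (abs_nonneg _) _))
  have hS : 0 ≤ ∑' n, nsum a b p u n := tsum_nonneg hnn
  have hSval : (∑' n, nsum a b p u n) = ρ ^ p := by
    have h1 : ((∑' n, nsum a b p u n) ^ ((p:ℝ)⁻¹)) = ρ := hnorm
    calc (∑' n, nsum a b p u n)
        = ((∑' n, nsum a b p u n) ^ ((p:ℝ)⁻¹)) ^ p := by
          rw [← Real.rpow_natCast (_ ^ ((p:ℝ)⁻¹)) p, ← Real.rpow_mul hS,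
            inv_mul_cancel₀ hpR, Real.rpow_one]
      _ = ρ ^ p := by rw [h1]
  have hρb : ρ ^ p ≤ b0 := by
    have h1 : ρ ≤ b0 ^ ((p:ℝ)⁻¹) := min_le_right _ _
    calc ρ ^ p ≤ (b0 ^ ((p:ℝ)⁻¹)) ^ p := pow_le_pow_left₀ hρpos.le h1 p
      _ = b0 := by
          rw [← Real.rpow_natCast (b0 ^ ((p:ℝ)⁻¹)) p, ← Real.rpow_mul hb0.le,
            inv_mul_cancel₀ hpR, Real.rpow_one]
  have hu1 : ∀ n, |u n| ≤ 1 := by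
    intro n
    have hle : nsum a b p u n ≤ ∑' m, nsum a b p u m :=
      Summable.le_tsum hu.1 n (fun j _ => hnn j)
    have hbn : b0 * |u n| ^ p ≤ nsum a b p u n := by
      have h1 : b0 * |u n| ^ p ≤ b n * |u n| ^ p :=
        mul_le_mul_of_nonneg_right (hbb n) (pow_nonneg (abs_nonneg _) _)
      have h2 : (0:ℝ) ≤ a n * |dlt u n| ^ p :=
        mul_nonneg (ha n).le (pow_nonneg (abs_nonneg _) _)
      unfold nsum; linarith
    have hfin : b0 * |u n| ^ p ≤ b0 * 1 := by
      rw [mul_one]; calc b0 * |u n| ^ p ≤ nsum a b p u n := hbn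
        _ ≤ ∑' m, nsum a b p u m := hle
        _ = ρ ^ p := hSval
        _ ≤ b0 := hρb
    have hup : |u n| ^ p ≤ 1 := le_of_mul_le_mul_left hfin hb0
    exact (pow_le_one_iff_of_nonneg (abs_nonneg _) hpn).mp hup
  have hT2 : (∑' n, logSummand c q r u n) ≤ 0 := by
    apply tsum_nonpos
    intro n
    unfold logSummand
    have hlog : Real.log (|u n| ^ r) ≤ 0 :=
      Real.log_nonpos (Real.rpow_nonneg (abs_nonneg _) r)
        (Real.rpow_le_one (abs_nonneg _) (hu1 n) (le_trans zero_le_one hr))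
    exact mul_nonpos_of_nonneg_of_nonpos
      (mul_nonneg (hc n).le (Real.rpow_nonneg (abs_nonneg _) q)) hlog
  have hT1 : 0 ≤ ∑' n, c n * |u n| ^ q :=
    tsum_nonneg fun n => mul_nonneg (hc n).le (Real.rpow_nonneg (abs_nonneg _) q)
  unfold En
  rw [hnorm]
  have h1 : 0 ≤ (r/q^2) * ∑' n, c n * |u n| ^ q :=
    mul_nonneg (div_nonneg (zero_le_one.trans hr) (sq_nonneg q)) hT1
  have h2 : (1/q) * (∑' n, logSummand c q r u n) ≤ 0 :=
    mul_nonpos_of_nonneg_of_nonpos (div_nonneg zero_le_one hq.le) hT2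
  linarith


end DPLap
end
end

section
/- There exists φ ∈ 𝒟 with φ ≠ 0 such that I(t·φ) → −∞ as t → +∞. -/
noncomputable section

open Real Filter Set

/-! Take `φ = δ₀`. Only finitely many terms of each series survive, and for `t > 0`
`I(tφ) = K tᵖ / p + (r c(0) / q²) t^q - (r c(0) / q) t^q ln t` with `K = a(-1) + a(0) + b(0)`.
Factoring out `t^q`, the bracket tends to `-∞` because `t^(p-q) → 0` and `ln t → ∞`. -/

open scoped Topology

theorem tendsto_mul_rpow_add_mul_rpow_sub_mul_rpow_mul_log_atBot {p q A B C : ℝ}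
    (hpq : p < q) (hq : 0 < q) (hC : 0 < C) :
    Tendsto (fun t => A * t ^ p + B * t ^ q - C * t ^ q * log t) atTop atBot := by
  have hsmall : Tendsto (fun t : ℝ => A * t ^ (p - q) + B) atTop (𝓝 (A * 0 + B)) := by
    have := tendsto_rpow_neg_atTop (sub_pos.mpr hpq)
    rw [neg_sub] at this
    exact (this.const_mul A).add_const B
  have hfactor : Tendsto (fun t : ℝ => t ^ q * (A * t ^ (p - q) + B - C * log t))
      atTop atBot := by
    refine (tendsto_rpow_atTop hq).atTop_mul_atBot₀ ?_
    simp_rw [sub_eq_add_neg]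
    exact hsmall.add_atBot
      (tendsto_neg_atTop_atBot.comp (tendsto_log_atTop.const_mul_atTop hC))
  refine hfactor.congr' ?_
  filter_upwards [eventually_gt_atTop 0] with t ht
  rw [mul_sub, mul_add, mul_left_comm, ← rpow_add ht, add_sub_cancel]
  ring

theorem hasSum_apply_single {ι M α : Type*} [DecidableEq ι] [Zero M] [AddCommMonoid α]
    [TopologicalSpace α] (f : ι → M → α) (hf : ∀ i, f i 0 = 0) (i : ι) (x : M) :
    HasSum (fun j => f j ((Pi.single i x : ι → M) j)) (f i x) := by
  convert hasSum_single (f := fun j => f j ((Pi.single i x : ι → M) j)) i fun j hj => ?_ using 1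
  · simp
  · simp [hj, hf]

namespace DPLap

variable {a b c : ℤ → ℝ} {p : ℕ} {q r : ℝ}

theorem dnorm_pow_of_hasSum {u : ℤ → ℝ} {s : ℝ} (hp : p ≠ 0)
    (hu : HasSum (nsum a b p u) s) (hs : 0 ≤ s) : dnorm a b p u ^ p = s := by
  rw [dnorm, hu.tsum_eq, ← rpow_natCast, ← rpow_mul hs,
    inv_mul_cancel₀ (Nat.cast_ne_zero.mpr hp), rpow_one]

theorem hasSum_nsum_single (hp : p ≠ 0) (t : ℝ) :
    HasSum (nsum a b p (Pi.single 0 t)) ((a (-1) + a 0 + b 0) * |t| ^ p) := by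
  have hsupp : ∀ n ∉ ({-1, 0} : Finset ℤ), nsum a b p (Pi.single 0 t) n = 0 := by
    intro n hn
    simp only [Finset.mem_insert, Finset.mem_singleton, not_or] at hn
    have hn' : n + 1 ≠ 0 := by omega
    simp [nsum, dlt, hn.2, hn', zero_pow hp]
  convert hasSum_sum_of_ne_finset_zero (L := SummationFilter.unconditional ℤ) hsupp using 1
  simp [nsum, dlt, zero_pow hp]
  ring

theorem hasSum_logSummand_single (hq : q ≠ 0) (t : ℝ) :
    HasSum (logSummand c q r (Pi.single 0 t)) (c 0 * |t| ^ q * log (|t| ^ r)) :=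
  hasSum_apply_single (fun n x => c n * |x| ^ q * log (|x| ^ r)) (by simp [zero_rpow hq]) 0 t

theorem En_single (hp : p ≠ 0) (hq : q ≠ 0) (hK : 0 ≤ a (-1) + a 0 + b 0) (t : ℝ) :
    En a b c p q r (Pi.single 0 t) =
      (1 / (p : ℝ)) * ((a (-1) + a 0 + b 0) * |t| ^ p) + (r / q ^ 2) * (c 0 * |t| ^ q)
        - (1 / q) * (c 0 * |t| ^ q * log (|t| ^ r)) := by
  have hc := hasSum_apply_single (fun n x => c n * |x| ^ q) (by simp [zero_rpow hq]) 0 t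
  rw [En, dnorm_pow_of_hasSum hp (hasSum_nsum_single hp t) (by positivity), hc.tsum_eq,
    (hasSum_logSummand_single hq t).tsum_eq]

theorem memD_single (hp : p ≠ 0) (hq : q ≠ 0) (t : ℝ) : memD a b c p q r (Pi.single 0 t) :=
  ⟨(hasSum_nsum_single hp t).summable, (hasSum_logSummand_single hq t).summable⟩

theorem stmt17_general (p : ℕ) (hp2 : 2 ≤ p)
    (q r : ℝ) (hpq : (p : ℝ) < q) (hr : 1 ≤ r)
    (a b c : ℤ → ℝ)
    (ha : ∀ n, 0 < a n) (hb : ∀ n, 0 < b n) (hc : ∀ n, 0 < c n) :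
    ∃ φ : ℤ → ℝ, memD a b c p q r φ ∧ φ ≠ 0 ∧
      Tendsto (fun t : ℝ => En a b c p q r (fun n => t * φ n)) atTop atBot := by
  have hp : p ≠ 0 := by omega
  have hq : 0 < q := (Nat.cast_nonneg p).trans_lt hpq
  have hK : 0 ≤ a (-1) + a 0 + b 0 := by linarith [ha (-1), ha 0, hb 0]
  refine ⟨Pi.single 0 1, memD_single hp hq.ne' 1, by simp, ?_⟩
  have hscale : ∀ t : ℝ, (fun n => t * (Pi.single 0 1 : ℤ → ℝ) n) = Pi.single 0 t :=
    fun t => funext fun n => by by_cases hn : n = 0 <;> simp [hn]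
  simp_rw [hscale]
  have hC : 0 < c 0 * r / q := div_pos (mul_pos (hc 0) (by linarith)) hq
  refine (tendsto_mul_rpow_add_mul_rpow_sub_mul_rpow_mul_log_atBot
    (A := (a (-1) + a 0 + b 0) / p) (B := r / q ^ 2 * c 0) hpq hq hC).congr' ?_
  filter_upwards [eventually_gt_atTop 0] with t ht
  rw [En_single hp hq.ne' hK, abs_of_pos ht, log_rpow ht, rpow_natCast]
  ring

theorem stmt17 (p : ℕ) (hp2 : 2 ≤ p) (hpe : Even p)
    (q r : ℝ) (hpq : (p : ℝ) < q) (hr : 1 ≤ r)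
    (a b c : ℤ → ℝ)
    (ha : ∀ n, 0 < a n) (hb : ∀ n, 0 < b n) (hc : ∀ n, 0 < c n)
    (b0 : ℝ) (hb0 : 0 < b0) (hbb : ∀ n, b0 ≤ b n)
    (hbinf : Tendsto b cofinite atTop)
    (c0 : ℝ) (hc0 : 0 < c0) (hcc : ∀ n, c n ≤ c0)
    (hcsum : Summable c) :
    ∃ φ : ℤ → ℝ, memD a b c p q r φ ∧ φ ≠ 0 ∧
      Tendsto (fun t : ℝ => En a b c p q r (fun n => t * φ n)) atTop atBot :=
  stmt17_general p hp2 q r hpq hr a b c ha hb hc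

end DPLap
end
end

section
/- Let p be an even integer with p ≥ 2 and let i, j be integers with 1 ≤ j ≤ i ≤ p/2. Then for all reals s, t ≥ 0 one has 2·s^p·C(p/2−1,i)·C(i,j) + s^p·C(p/2−1,i−1)·C(i−1,j) + 2·t^p·C(p/2−1,i−1)·C(i−1,j−1) + t^p·C(p/2−1,i−1)·C(i−1,j) ≥ 2·s^{p−(i+j)}·t^{i+j}·C(p/2,i)·C(i,j). -/
/-!
Write `p = 2M` and `k = i + j`. The left-hand side is `X s^p + Y t^p` where, by Pascal's rule,
`X + Y = 2 C(M,i) C(i,j)`, and, by the absorption identities `M C(M-1,i-1) = i C(M,i)` and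
`i C(i-1,j-1) = j C(i,j)`, `p Y = k (X + Y)`. Hence the left-hand side is `2 C(M,i) C(i,j)` times the
weighted arithmetic mean `((p-k)/p) s^p + (k/p) t^p`, which dominates the geometric mean `s^(p-k) t^k`.
-/

theorem mul_pow_mul_pow_le_of_add_eq {a b n : ℕ} (hab : a + b = n) {s t : ℝ}
    (hs : 0 ≤ s) (ht : 0 ≤ t) :
    (n : ℝ) * (s ^ a * t ^ b) ≤ a * s ^ n + b * t ^ n := by
  obtain rfl | hn := n.eq_zero_or_pos
  · obtain ⟨rfl, rfl⟩ : a = 0 ∧ b = 0 := by omega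
    simp
  have hn' : (n : ℝ) ≠ 0 := by positivity
  have rpow_pow_div {x : ℝ} (hx : 0 ≤ x) (k : ℕ) : (x ^ n) ^ ((k : ℝ) / n) = x ^ k := by
    rw [← Real.rpow_natCast x n, ← Real.rpow_mul hx, mul_div_cancel₀ _ hn', Real.rpow_natCast]
  have h := Real.geom_mean_le_arith_mean2_weighted (w₁ := a / n) (w₂ := b / n)
    (p₁ := s ^ n) (p₂ := t ^ n) (by positivity) (by positivity) (by positivity) (by positivity)
    (by rw [← add_div, ← Nat.cast_add, hab, div_self hn'])
  rw [rpow_pow_div hs, rpow_pow_div ht] at h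
  calc (n : ℝ) * (s ^ a * t ^ b) ≤ n * (a / n * s ^ n + b / n * t ^ n) := by gcongr
    _ = a * s ^ n + b * t ^ n := by field_simp

theorem mul_pow_mul_pow_le_of_weights {a b n : ℕ} (hab : a + b = n) (hn : 0 < n) {s t X Y Z : ℝ}
    (hs : 0 ≤ s) (ht : 0 ≤ t) (hZ : 0 ≤ Z) (hsum : X + Y = Z) (hY : n * Y = b * Z) :
    Z * (s ^ a * t ^ b) ≤ X * s ^ n + Y * t ^ n := by
  have hX : n * X = a * Z := by
    have : (n : ℝ) = a + b := by exact_mod_cast hab.symm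
    linear_combination (n : ℝ) * hsum - hY + Z * this
  have hn' : (0 : ℝ) < n := by exact_mod_cast hn
  refine le_of_mul_le_mul_left ?_ hn'
  calc (n : ℝ) * (Z * (s ^ a * t ^ b)) = Z * (n * (s ^ a * t ^ b)) := by ring
    _ ≤ Z * (a * s ^ n + b * t ^ n) := by gcongr; exact mul_pow_mul_pow_le_of_add_eq hab hs ht
    _ = n * (X * s ^ n + Y * t ^ n) := by linear_combination (-s ^ n) * hX - t ^ n * hY

-- With `p = 2 (m + 1)` and the indices shifted to `i + 1`, `j + 1`, these are the coefficients of
-- `s ^ p` and `t ^ p` on the left-hand side.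
def sCoeff (m i j : ℕ) : ℕ := 2 * m.choose (i + 1) * (i + 1).choose (j + 1) + m.choose i * i.choose (j + 1)

def tCoeff (m i j : ℕ) : ℕ := m.choose i * (2 * i.choose j + i.choose (j + 1))

theorem sCoeff_add_tCoeff (m i j : ℕ) :
    sCoeff m i j + tCoeff m i j = 2 * (m + 1).choose (i + 1) * (i + 1).choose (j + 1) := by
  rw [sCoeff, tCoeff, Nat.choose_succ_succ' m i, Nat.choose_succ_succ' i j]
  ring

theorem mul_tCoeff (m i j : ℕ) :
    2 * (m + 1) * tCoeff m i j
      = (i + 1 + (j + 1)) * (2 * (m + 1).choose (i + 1) * (i + 1).choose (j + 1)) := by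
  have h1 := Nat.add_one_mul_choose_eq m i
  have h2 := Nat.add_one_mul_choose_eq i j
  have h3 := Nat.choose_succ_succ' i j
  rw [tCoeff]
  linear_combination (2 * (2 * i.choose j + i.choose (j + 1))) * h1
    + 2 * (m + 1).choose (i + 1) * h2 - 2 * (m + 1).choose (i + 1) * (i + 1) * h3

theorem stmt19_general (p : ℕ) (hpe : Even p) (i j : ℕ)
    (hj1 : 1 ≤ j) (hji : j ≤ i) (hip : i ≤ p / 2)
    (s t : ℝ) (hs : 0 ≤ s) (ht : 0 ≤ t) :
    2 * s ^ p * ((p / 2 - 1).choose i : ℝ) * (i.choose j : ℝ)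
        + s ^ p * ((p / 2 - 1).choose (i - 1) : ℝ) * ((i - 1).choose j : ℝ)
        + 2 * t ^ p * ((p / 2 - 1).choose (i - 1) : ℝ) * ((i - 1).choose (j - 1) : ℝ)
        + t ^ p * ((p / 2 - 1).choose (i - 1) : ℝ) * ((i - 1).choose j : ℝ)
      ≥ 2 * s ^ (p - (i + j)) * t ^ (i + j) * ((p / 2).choose i : ℝ) * (i.choose j : ℝ) := by
  obtain ⟨m, hm⟩ : ∃ m, p / 2 = m + 1 := ⟨p / 2 - 1, by omega⟩
  have hp : p = 2 * (m + 1) := by obtain ⟨r, hr⟩ := hpe; omega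
  obtain ⟨i, rfl⟩ : ∃ i', i = i' + 1 := ⟨i - 1, by omega⟩
  obtain ⟨j, rfl⟩ : ∃ j', j = j' + 1 := ⟨j - 1, by omega⟩
  have key := mul_pow_mul_pow_le_of_weights (X := sCoeff m i j) (Y := tCoeff m i j)
    (Nat.sub_add_cancel (by omega : i + 1 + (j + 1) ≤ p)) (by omega) hs ht (Nat.cast_nonneg _)
    (by exact_mod_cast sCoeff_add_tCoeff m i j) (by rw [hp]; exact_mod_cast mul_tCoeff m i j)
  simp only [hm, Nat.add_sub_cancel]
  push_cast [sCoeff, tCoeff] at key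
  linarith

theorem stmt19 (p : ℕ) (hp2 : 2 ≤ p) (hpe : Even p) (i j : ℕ)
    (hj1 : 1 ≤ j) (hji : j ≤ i) (hip : i ≤ p / 2)
    (s t : ℝ) (hs : 0 ≤ s) (ht : 0 ≤ t) :
    2 * s ^ p * ((p / 2 - 1).choose i : ℝ) * (i.choose j : ℝ)
        + s ^ p * ((p / 2 - 1).choose (i - 1) : ℝ) * ((i - 1).choose j : ℝ)
        + 2 * t ^ p * ((p / 2 - 1).choose (i - 1) : ℝ) * ((i - 1).choose (j - 1) : ℝ)
        + t ^ p * ((p / 2 - 1).choose (i - 1) : ℝ) * ((i - 1).choose j : ℝ)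
      ≥ 2 * s ^ (p - (i + j)) * t ^ (i + j) * ((p / 2).choose i : ℝ) * (i.choose j : ℝ) :=
  stmt19_general p hpe i j hj1 hji hip s t hs ht
end
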